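/- Under uniform random partition into groups of sizes N_a for a in a finite set 𝔸 of cardinality |𝔸| = T+1, the variance of Σ_{a∈𝔸} Ȳ_a satisfies Var(Σ_{a∈𝔸} Ȳ_a) = Σ_{a∈𝔸} S_a²·(1/N_a + (T−1)/N) − (1/N)·Σ_{a<a'} V_{aa'}². -/

import Mathlib

open Finset

-- membership in Ω is closed under precomposition with a permutation
lemma perm_fiber {α : Type*} [Fintype α] [DecidableEq α] {N : ℕ} (Na : α → ℕ)
    (A : Fin N → α) (σ : Equiv.Perm (Fin N))
    (h : ∀ a, (Finset.univ.filter (fun i => A i = a)).card = Na a) :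
    ∀ a, (Finset.univ.filter (fun i => A (σ i) = a)).card = Na a := by
  intro a
  rw [← h a]
  apply Finset.card_bij' (fun i _ => σ i) (fun j _ => σ.symm j) <;>
    simp [Finset.mem_filter]

section counting
variable {α : Type*} [Fintype α] [DecidableEq α] {N : ℕ} (Na : α → ℕ)
  (Ω : Finset (Fin N → α))
  (hΩ : Ω = Finset.univ.filter
      (fun A => ∀ a, (Finset.univ.filter (fun i => A i = a)).card = Na a))

include hΩ

lemma memΩ : ∀ A, A ∈ Ω ↔ ∀ a, (Finset.univ.filter (fun i => A i = a)).card = Na a := by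
  intro A; rw [hΩ]; simp

lemma permΩ (A : Fin N → α) (σ : Equiv.Perm (Fin N)) (hA : A ∈ Ω) : (A ∘ σ) ∈ Ω := by
  rw [memΩ Na Ω hΩ] at *
  exact fun a => perm_fiber Na A σ hA a

lemma count1_indep (i j : Fin N) (a : α) :
    (Ω.filter (fun A => A i = a)).card = (Ω.filter (fun A => A j = a)).card := by
  apply Finset.card_bij' (fun A _ => A ∘ Equiv.swap i j) (fun A _ => A ∘ Equiv.swap i j)
  · intro A hA
    simp only [Finset.mem_filter] at hA ⊢
    refine ⟨permΩ Na Ω hΩ A _ hA.1, ?_⟩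
    simpa [Function.comp, Equiv.swap_apply_right] using hA.2
  · intro A hA
    simp only [Finset.mem_filter] at hA ⊢
    refine ⟨permΩ Na Ω hΩ A _ hA.1, ?_⟩
    simpa [Function.comp, Equiv.swap_apply_left] using hA.2
  · intro A _; funext k; simp [Function.comp, Equiv.swap_apply_self]
  · intro A _; funext k; simp [Function.comp, Equiv.swap_apply_self]

lemma count1_val (i : Fin N) (a : α) :
    N * (Ω.filter (fun A => A i = a)).card = Na a * Ω.card := by
  have h1 : ∑ j : Fin N, (Ω.filter (fun A => A j = a)).card = Na a * Ω.card := by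
    have : ∀ j : Fin N, (Ω.filter (fun A => A j = a)).card
        = ∑ A ∈ Ω, if A j = a then 1 else 0 := by
      intro j; rw [Finset.card_filter]
    simp_rw [this]
    rw [Finset.sum_comm]
    have : ∀ A ∈ Ω, (∑ j : Fin N, if A j = a then 1 else 0) = Na a := by
      intro A hA
      rw [← Finset.card_filter]
      exact (memΩ Na Ω hΩ A).1 hA a
    rw [Finset.sum_congr rfl this, Finset.sum_const, smul_eq_mul, mul_comm]
  rw [← h1]
  have : ∀ j : Fin N, (Ω.filter (fun A => A j = a)).card
      = (Ω.filter (fun A => A i = a)).card := fun j => count1_indep Na Ω hΩ j i a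
  rw [Finset.sum_congr rfl fun j _ => this j, Finset.sum_const, smul_eq_mul]
  simp [mul_comm]

omit hΩ in
lemma exists_perm_pair {i j k l : Fin N} (hij : i ≠ j) (hkl : k ≠ l) :
    ∃ σ : Equiv.Perm (Fin N), σ i = k ∧ σ j = l := by
  classical
  set τ := Equiv.swap k i with hτ
  have h1 : τ i = k := Equiv.swap_apply_right k i
  set j' := τ j with hj'
  have hj'k : j' ≠ k := by
    intro h
    apply hij
    have := τ.injective (h.trans h1.symm)
    exact this.symm ▸ rfl
  refine ⟨τ.trans (Equiv.swap l j'), ?_, ?_⟩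
  · show Equiv.swap l j' (τ i) = k
    rw [h1, Equiv.swap_apply_of_ne_of_ne (fun h => hkl h) (fun h => hj'k h.symm)]
  · show Equiv.swap l j' (τ j) = l
    rw [← hj', Equiv.swap_apply_right]

lemma count2_indep {i j k l : Fin N} (hij : i ≠ j) (hkl : k ≠ l) (a b : α) :
    (Ω.filter (fun A => A i = a ∧ A j = b)).card
      = (Ω.filter (fun A => A k = a ∧ A l = b)).card := by
  obtain ⟨σ, hσk, hσl⟩ := exists_perm_pair (N := N) hkl hij
  apply Finset.card_bij' (fun A _ => A ∘ σ) (fun A _ => A ∘ σ.symm)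
  · intro A hA
    simp only [Finset.mem_filter] at hA ⊢
    exact ⟨permΩ Na Ω hΩ A σ hA.1, by rw [Function.comp_apply, hσk]; exact hA.2.1,
      by rw [Function.comp_apply, hσl]; exact hA.2.2⟩
  · intro A hA
    simp only [Finset.mem_filter] at hA ⊢
    refine ⟨permΩ Na Ω hΩ A σ.symm hA.1, ?_, ?_⟩
    · rw [Function.comp_apply, ← hσk, Equiv.symm_apply_apply]; exact hA.2.1
    · rw [Function.comp_apply, ← hσl, Equiv.symm_apply_apply]; exact hA.2.2
  · intro A _; funext m; simp
  · intro A _; funext m; simp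

-- per-A pair count
omit hΩ in
lemma pair_count (A : Fin N → α) (a b : α)
    (hA : ∀ a, (Finset.univ.filter (fun i => A i = a)).card = Na a) :
    ((Finset.univ.offDiag).filter (fun p : Fin N × Fin N => A p.1 = a ∧ A p.2 = b)).card
      + (if a = b then Na a else 0) = Na a * Na b := by
  classical
  have key : ((Finset.univ.filter (fun i => A i = a)) ×ˢ (Finset.univ.filter (fun i => A i = b))).card
      = Na a * Na b := by rw [Finset.card_product, hA, hA]
  set s := (Finset.univ.filter (fun i => A i = a)) ×ˢ (Finset.univ.filter (fun i => A i = b)) with hs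
  have split : (s.filter (fun p => p.1 ≠ p.2)).card + (s.filter (fun p => ¬ p.1 ≠ p.2)).card = s.card :=
    Finset.card_filter_add_card_filter_not _
  have e1 : s.filter (fun p => p.1 ≠ p.2)
      = (Finset.univ.offDiag).filter (fun p : Fin N × Fin N => A p.1 = a ∧ A p.2 = b) := by
    ext p
    simp only [hs, Finset.mem_filter, Finset.mem_product, Finset.mem_offDiag, Finset.mem_univ,
      true_and]
    tauto
  have e2 : (s.filter (fun p => ¬ p.1 ≠ p.2)).card = if a = b then Na a else 0 := by
    by_cases hab : a = b
    · subst hab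
      simp only [if_pos rfl]
      rw [← hA a]
      have him : s.filter (fun p => ¬ p.1 ≠ p.2)
          = (Finset.univ.filter (fun i => A i = a)).image (fun i => (i, i)) := by
        ext p
        simp only [hs, Finset.mem_filter, Finset.mem_product, Finset.mem_image, not_not,
          Finset.mem_univ, true_and]
        constructor
        · rintro ⟨⟨h1, _⟩, h3⟩
          exact ⟨p.1, h1, Prod.ext rfl h3⟩
        · rintro ⟨i, hi, rfl⟩
          exact ⟨⟨hi, hi⟩, rfl⟩
      rw [him, Finset.card_image_of_injective _ (fun x y h => (Prod.mk.injEq _ _ _ _ ▸ h : _ ∧ _).1)]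
      simp
    · rw [if_neg hab]
      rw [Finset.card_eq_zero]
      apply Finset.filter_eq_empty_iff.2
      intro p hp
      simp only [hs, Finset.mem_product, Finset.mem_filter] at hp
      intro h
      rw [not_not] at h
      exact hab (hp.1.2.symm.trans (h ▸ hp.2.2))
  rw [e1] at split
  rw [← key, ← split, e2]

lemma count2_val {i j : Fin N} (hij : i ≠ j) (a b : α) :
    N * (N - 1) * (Ω.filter (fun A => A i = a ∧ A j = b)).card
      + (if a = b then Na a else 0) * Ω.card = Na a * Na b * Ω.card := by
  classical
  have h1 : ∑ p ∈ (Finset.univ.offDiag : Finset ((Fin N) × (Fin N))),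
      (Ω.filter (fun A => A p.1 = a ∧ A p.2 = b)).card
      = ∑ A ∈ Ω, ((Finset.univ.offDiag).filter
          (fun p : Fin N × Fin N => A p.1 = a ∧ A p.2 = b)).card := by
    calc ∑ p ∈ (Finset.univ.offDiag : Finset ((Fin N) × (Fin N))),
        (Ω.filter (fun A => A p.1 = a ∧ A p.2 = b)).card
        = ∑ p ∈ (Finset.univ.offDiag : Finset ((Fin N) × (Fin N))),
            ∑ A ∈ Ω, (if A p.1 = a ∧ A p.2 = b then 1 else 0) := by
          refine Finset.sum_congr rfl fun p _ => ?_
          rw [Finset.card_filter]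
      _ = ∑ A ∈ Ω, ∑ p ∈ (Finset.univ.offDiag : Finset ((Fin N) × (Fin N))),
            (if A p.1 = a ∧ A p.2 = b then 1 else 0) := Finset.sum_comm
      _ = ∑ A ∈ Ω, ((Finset.univ.offDiag).filter
            (fun p : Fin N × Fin N => A p.1 = a ∧ A p.2 = b)).card := by
          refine Finset.sum_congr rfl fun A _ => ?_
          rw [Finset.card_filter]
  have h2 : ∑ p ∈ (Finset.univ.offDiag : Finset ((Fin N) × (Fin N))),
      (Ω.filter (fun A => A p.1 = a ∧ A p.2 = b)).card
      = N * (N-1) * (Ω.filter (fun A => A i = a ∧ A j = b)).card := by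
    have : ∀ p ∈ (Finset.univ.offDiag : Finset ((Fin N) × (Fin N))),
        (Ω.filter (fun A => A p.1 = a ∧ A p.2 = b)).card
          = (Ω.filter (fun A => A i = a ∧ A j = b)).card := by
      intro p hp
      rw [Finset.mem_offDiag] at hp
      exact count2_indep Na Ω hΩ hp.2.2 hij a b
    rw [Finset.sum_congr rfl this, Finset.sum_const, smul_eq_mul, Finset.offDiag_card]
    have : N * (N - 1) = N * N - N := by rw [Nat.mul_sub, Nat.mul_one]
    simp [this]
  have h3 : ∑ A ∈ Ω, ((Finset.univ.offDiag).filter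
        (fun p : Fin N × Fin N => A p.1 = a ∧ A p.2 = b)).card
        + (if a = b then Na a else 0) * Ω.card = Na a * Na b * Ω.card := by
    have : ∀ A ∈ Ω, ((Finset.univ.offDiag).filter
          (fun p : Fin N × Fin N => A p.1 = a ∧ A p.2 = b)).card
        = Na a * Na b - (if a = b then Na a else 0) := by
      intro A hA
      exact Nat.eq_sub_of_add_eq (pair_count Na A a b ((memΩ Na Ω hΩ A).1 hA))
    rw [Finset.sum_congr rfl this, Finset.sum_const, smul_eq_mul]
    have hle : (if a = b then Na a else 0) ≤ Na a * Na b := by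
      split
      · rcases Nat.eq_zero_or_pos (Na b) with h0 | h0
        · simp_all
        · exact Nat.le_mul_of_pos_right _ h0
      · exact Nat.zero_le _
    have hle2 : Ω.card * (if a = b then Na a else 0) ≤ Ω.card * (Na a * Na b) :=
      Nat.mul_le_mul_left _ hle
    rw [Nat.mul_sub, mul_comm (if a = b then Na a else 0) Ω.card,
      Nat.sub_add_cancel hle2, mul_comm]
  have key : N * (N - 1) * (Ω.filter (fun A => A i = a ∧ A j = b)).card
      = ∑ A ∈ Ω, ((Finset.univ.offDiag).filter
          (fun p : Fin N × Fin N => A p.1 = a ∧ A p.2 = b)).card := h2.symm.trans h1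
  rw [key]
  exact h3

lemma Ω_nonempty (hsum : ∑ a, Na a = N) : Ω.Nonempty := by
  classical
  have hc : Fintype.card (Σ a : α, Fin (Na a)) = Fintype.card (Fin N) := by
    simp [Fintype.card_sigma, hsum]
  obtain ⟨e⟩ := Fintype.card_eq.mp hc
  refine ⟨fun i => (e.symm i).1, ?_⟩
  rw [memΩ Na Ω hΩ]
  intro a
  have h1 : (Finset.univ.filter (fun i => (e.symm i).1 = a)).card
      = (Finset.univ.filter (fun s : Σ a : α, Fin (Na a) => s.1 = a)).card := by
    apply Finset.card_bij' (fun i _ => e.symm i) (fun s _ => e s) <;> simp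
  rw [h1]
  have h2 : (Finset.univ.filter (fun s : Σ a : α, Fin (Na a) => s.1 = a))
      = ({a} : Finset α).sigma (fun a' => Finset.univ) := by
    ext ⟨x, y⟩
    simp [Finset.mem_sigma]
  rw [h2, Finset.card_sigma]
  simp

lemma count1_real (hN0 : 0 < N) (i : Fin N) (a : α) :
    ((Ω.filter (fun A => A i = a)).card : ℝ) = Na a * Ω.card / N := by
  have h := congrArg (Nat.cast (R := ℝ)) (count1_val Na Ω hΩ i a)
  push_cast at h
  have hNne : (N : ℝ) ≠ 0 := Nat.cast_ne_zero.2 hN0.ne'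
  field_simp
  linarith [h]

lemma count2_real (hN : 2 ≤ N) {i j : Fin N} (hij : i ≠ j) (a b : α) :
    ((Ω.filter (fun A => A i = a ∧ A j = b)).card : ℝ)
      = (Ω.card : ℝ) * ((Na a : ℝ) * Na b - if a = b then (Na a : ℝ) else 0)
        / ((N : ℝ) * ((N : ℝ) - 1)) := by
  have h := count2_val Na Ω hΩ hij a b
  have hcast : (N : ℝ) * ((N : ℝ) - 1) * ((Ω.filter (fun A => A i = a ∧ A j = b)).card : ℝ)
      + (if a = b then (Na a : ℝ) else 0) * Ω.card = (Na a : ℝ) * Na b * Ω.card := by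
    have h' := congrArg (Nat.cast (R := ℝ)) h
    push_cast at h'
    rw [Nat.cast_pred (Nat.lt_of_lt_of_le Nat.zero_lt_two hN)] at h'
    by_cases hab : a = b <;> simp only [hab, if_true, if_false] <;> simp [hab] at h' <;> linarith
  have h1 : (N : ℝ) ≠ 0 := by positivity
  have h2 : (N : ℝ) - 1 ≠ 0 := by
    have : (2 : ℝ) ≤ N := by exact_mod_cast hN
    linarith
  field_simp
  by_cases hab : a = b
  · subst hab; simp only [if_pos rfl] at hcast ⊢; linarith [hcast]
  · simp only [if_neg hab] at hcast ⊢; linarith [hcast]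

lemma first_moment (hN0 : 0 < N) (hNa : ∀ a, 0 < Na a) (Y : Fin N → α → ℝ) (a : α) :
    ∑ A ∈ Ω, ((1 / (Na a : ℝ)) * ∑ i ∈ Finset.univ.filter (fun i => A i = a), Y i a)
      = (Ω.card : ℝ) / N * ∑ i, Y i a := by
  have step1 : ∀ A : Fin N → α, ((1 / (Na a : ℝ)) * ∑ i ∈ Finset.univ.filter (fun i => A i = a), Y i a)
      = (1 / (Na a : ℝ)) * ∑ i, if A i = a then Y i a else 0 := by
    intro A; rw [Finset.sum_filter]
  rw [Finset.sum_congr rfl fun A _ => step1 A, ← Finset.mul_sum, Finset.sum_comm]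
  have step2 : ∀ i : Fin N, ∑ A ∈ Ω, (if A i = a then Y i a else 0)
      = Y i a * ((Na a : ℝ) * Ω.card / N) := by
    intro i
    rw [← Finset.sum_filter, Finset.sum_const, nsmul_eq_mul, ← count1_real Na Ω hΩ hN0 i a,
      mul_comm]
  rw [Finset.sum_congr rfl fun i _ => step2 i, ← Finset.sum_mul]
  have hNane : (Na a : ℝ) ≠ 0 := Nat.cast_ne_zero.2 (hNa a).ne'
  have hNne : (N : ℝ) ≠ 0 := Nat.cast_ne_zero.2 hN0.ne'
  field_simp

lemma second_moment (hN : 2 ≤ N) (hNa : ∀ a, 0 < Na a) (Y : Fin N → α → ℝ) (a b : α) :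
    ∑ A ∈ Ω, ((1 / (Na a : ℝ)) * ∑ i ∈ Finset.univ.filter (fun i => A i = a), Y i a)
        * ((1 / (Na b : ℝ)) * ∑ j ∈ Finset.univ.filter (fun j => A j = b), Y j b)
      = (Ω.card : ℝ) * ((if a = b then (∑ i, Y i a * Y i b) / ((N : ℝ) * Na a) else 0)
          + ((∑ i, Y i a) * (∑ j, Y j b) - ∑ i, Y i a * Y i b)
            * (1 - (if a = b then 1 / (Na a : ℝ) else 0)) / ((N : ℝ) * ((N : ℝ) - 1))) := by
  classical
  have hN0 : 0 < N := Nat.lt_of_lt_of_le Nat.zero_lt_two hN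
  set M : ℝ := (Ω.card : ℝ) with hM
  -- step 1: rewrite as double sum of counts
  have step1 : ∑ A ∈ Ω, ((1 / (Na a : ℝ)) * ∑ i ∈ Finset.univ.filter (fun i => A i = a), Y i a)
        * ((1 / (Na b : ℝ)) * ∑ j ∈ Finset.univ.filter (fun j => A j = b), Y j b)
      = (1 / (Na a : ℝ)) * (1 / (Na b : ℝ))
          * ∑ i, ∑ j, (Y i a * Y j b)
              * ((Ω.filter (fun A => A i = a ∧ A j = b)).card : ℝ) := by
    have e1 : ∀ A : Fin N → α, ((1 / (Na a : ℝ)) * ∑ i ∈ Finset.univ.filter (fun i => A i = a), Y i a)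
        * ((1 / (Na b : ℝ)) * ∑ j ∈ Finset.univ.filter (fun j => A j = b), Y j b)
        = (1 / (Na a : ℝ)) * (1 / (Na b : ℝ))
            * ∑ i, ∑ j, (if A i = a then Y i a else 0) * (if A j = b then Y j b else 0) := by
      intro A
      have hs : (∑ i, if A i = a then Y i a else 0) * (∑ j, if A j = b then Y j b else 0)
          = ∑ i, ∑ j, (if A i = a then Y i a else 0) * (if A j = b then Y j b else 0) :=
        Finset.sum_mul_sum _ _ _ _
      rw [← Finset.sum_filter (fun i => A i = a) (fun i => Y i a),
        ← Finset.sum_filter (fun j => A j = b) (fun j => Y j b)] at hs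
      rw [show (1 / (Na a : ℝ) * ∑ i ∈ Finset.univ.filter (fun i => A i = a), Y i a)
          * (1 / (Na b : ℝ) * ∑ j ∈ Finset.univ.filter (fun j => A j = b), Y j b)
          = 1 / (Na a : ℝ) * (1 / (Na b : ℝ))
            * ((∑ i ∈ Finset.univ.filter (fun i => A i = a), Y i a)
              * (∑ j ∈ Finset.univ.filter (fun j => A j = b), Y j b)) from by ring, hs]
    rw [Finset.sum_congr rfl fun A _ => e1 A, ← Finset.mul_sum]
    congr 1
    rw [Finset.sum_comm]
    refine Finset.sum_congr rfl fun i _ => ?_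
    rw [Finset.sum_comm]
    refine Finset.sum_congr rfl fun j _ => ?_
    have : ∀ A : Fin N → α, (if A i = a then Y i a else 0) * (if A j = b then Y j b else 0)
        = if A i = a ∧ A j = b then Y i a * Y j b else 0 := by
      intro A; split_ifs <;> simp_all
    rw [Finset.sum_congr rfl fun A _ => this A, ← Finset.sum_filter, Finset.sum_const,
      nsmul_eq_mul, mul_comm]
  rw [step1]
  -- diagonal counts
  have hdiag : ∀ i : Fin N, ((Ω.filter (fun A => A i = a ∧ A i = b)).card : ℝ)
      = if a = b then (Na a : ℝ) * M / N else 0 := by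
    intro i
    by_cases hab : a = b
    · subst hab
      simp only [if_pos rfl, and_self]
      exact count1_real Na Ω hΩ hN0 i a
    · rw [if_neg hab]
      norm_cast
      rw [Finset.card_eq_zero, Finset.filter_eq_empty_iff]
      rintro A _ ⟨h1, h2⟩
      exact hab (h1.symm.trans h2)
  -- off-diagonal counts
  have hoff : ∀ i j : Fin N, i ≠ j → ((Ω.filter (fun A => A i = a ∧ A j = b)).card : ℝ)
      = M * ((Na a : ℝ) * Na b - if a = b then (Na a : ℝ) else 0) / ((N : ℝ) * ((N : ℝ) - 1)) :=
    fun i j hij => count2_real Na Ω hΩ hN hij a b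
  -- evaluate the double sum
  have step2 : ∑ i, ∑ j, (Y i a * Y j b) * ((Ω.filter (fun A => A i = a ∧ A j = b)).card : ℝ)
      = (if a = b then (Na a : ℝ) * M / N else 0) * (∑ i, Y i a * Y i b)
        + M * ((Na a : ℝ) * Na b - if a = b then (Na a : ℝ) else 0) / ((N : ℝ) * ((N : ℝ) - 1))
          * ((∑ i, Y i a) * (∑ j, Y j b) - ∑ i, Y i a * Y i b) := by
    have e2 : ∀ i : Fin N, ∑ j, (Y i a * Y j b) * ((Ω.filter (fun A => A i = a ∧ A j = b)).card : ℝ)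
        = (Y i a * Y i b) * (if a = b then (Na a : ℝ) * M / N else 0)
          + M * ((Na a : ℝ) * Na b - if a = b then (Na a : ℝ) else 0) / ((N : ℝ) * ((N : ℝ) - 1))
            * (Y i a * ((∑ j, Y j b) - Y i b)) := by
      intro i
      rw [← Finset.add_sum_erase _ _ (Finset.mem_univ i), hdiag i]
      congr 1
      have : ∀ j ∈ Finset.univ.erase i, (Y i a * Y j b) * ((Ω.filter (fun A => A i = a ∧ A j = b)).card : ℝ)
          = M * ((Na a : ℝ) * Na b - if a = b then (Na a : ℝ) else 0) / ((N : ℝ) * ((N : ℝ) - 1))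
            * (Y i a * Y j b) := by
        intro j hj
        rw [hoff i j (Finset.ne_of_mem_erase hj).symm]
        ring
      rw [Finset.sum_congr rfl this, ← Finset.mul_sum]
      congr 1
      rw [← Finset.mul_sum, Finset.sum_erase_eq_sub (Finset.mem_univ i)]
    rw [Finset.sum_congr rfl fun i _ => e2 i, Finset.sum_add_distrib]
    congr 1
    · rw [← Finset.sum_mul]
      ring
    · rw [← Finset.mul_sum]
      congr 1
      calc ∑ i, Y i a * ((∑ j, Y j b) - Y i b)
          = (∑ i, Y i a * (∑ j, Y j b)) - ∑ i, Y i a * Y i b := by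
            rw [← Finset.sum_sub_distrib]
            exact Finset.sum_congr rfl fun i _ => by ring
        _ = (∑ i, Y i a) * (∑ j, Y j b) - ∑ i, Y i a * Y i b := by rw [← Finset.sum_mul]
  rw [step2]
  -- final algebra
  have hNane : (Na a : ℝ) ≠ 0 := Nat.cast_ne_zero.2 (hNa a).ne'
  have hNbne : (Na b : ℝ) ≠ 0 := Nat.cast_ne_zero.2 (hNa b).ne'
  have h1 : (N : ℝ) ≠ 0 := Nat.cast_ne_zero.2 hN0.ne'
  have h2 : (N : ℝ) - 1 ≠ 0 := by
    have : (2 : ℝ) ≤ N := by exact_mod_cast hN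
    linarith
  by_cases hab : a = b
  · subst hab
    simp only [if_pos rfl, eq_self_iff_true, ↓reduceIte]
    field_simp
  · simp only [if_neg hab]
    field_simp
    ring

end counting

lemma sum_affine4 {β : Type*} [Fintype β] (c0 c1 c2 c3 c4 : ℝ) (f1 f2 f3 f4 : β → ℝ) :
    ∑ b : β, (c0 + c1 * f1 b + c2 * f2 b + c3 * f3 b + c4 * f4 b)
      = (Fintype.card β : ℝ) * c0 + c1 * ∑ b, f1 b + c2 * ∑ b, f2 b
        + c3 * ∑ b, f3 b + c4 * ∑ b, f4 b := by
  rw [Finset.sum_add_distrib, Finset.sum_add_distrib, Finset.sum_add_distrib,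
    Finset.sum_add_distrib, Finset.sum_const, ← Finset.mul_sum, ← Finset.mul_sum,
    ← Finset.mul_sum, ← Finset.mul_sum, nsmul_eq_mul, Finset.card_univ]

lemma diag_sum {β : Type*} [Fintype β] [DecidableEq β] (f : β → β → ℝ) :
    ∑ a : β, ∑ b : β, (if a = b then f a b else 0) = ∑ a, f a a := by
  refine Finset.sum_congr rfl fun a _ => ?_
  simp

lemma pair_sum {β : Type*} [Fintype β] [DecidableEq β] [LinearOrder β]
    (g : β → β → ℝ) (hg : ∀ a b, g a b = g b a) :
    2 * (∑ a : β, ∑ b ∈ Finset.univ.filter (fun b => a < b), g a b)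
      = (∑ a : β, ∑ b : β, g a b) - ∑ a : β, g a a := by
  have h1 : ∀ a : β, ∑ b ∈ Finset.univ.filter (fun b => a < b), g a b
      = ∑ b : β, if a < b then g a b else 0 := fun a => Finset.sum_filter _ _
  have h2 : ∑ a : β, ∑ b : β, (if b < a then g a b else 0)
      = ∑ a : β, ∑ b : β, (if a < b then g a b else 0) := by
    rw [Finset.sum_comm]
    refine Finset.sum_congr rfl fun a _ => Finset.sum_congr rfl fun b _ => ?_
    rw [hg]
  have h3 : ∑ a : β, ∑ b : β, g a b
      = ∑ a : β, ∑ b : β, ((if a < b then g a b else 0) + (if b < a then g a b else 0)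
          + (if a = b then g a b else 0)) := by
    refine Finset.sum_congr rfl fun a _ => Finset.sum_congr rfl fun b _ => ?_
    rcases lt_trichotomy a b with h | h | h
    · simp [h, not_lt_of_gt h, ne_of_lt h]
    · simp [h, lt_irrefl]
    · simp [h, not_lt_of_gt h, (ne_of_lt h).symm]
  rw [h3]
  simp only [Finset.sum_add_distrib]
  rw [h2, diag_sum]
  simp only [← h1]
  ring

lemma sum_affine5 {β : Type*} [Fintype β] (c0 c1 c2 c3 c4 c5 : ℝ) (f1 f2 f3 f4 f5 : β → ℝ) :
    ∑ b : β, (c0 + c1 * f1 b + c2 * f2 b + c3 * f3 b + c4 * f4 b + c5 * f5 b)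
      = (Fintype.card β : ℝ) * c0 + c1 * ∑ b, f1 b + c2 * ∑ b, f2 b + c3 * ∑ b, f3 b
        + c4 * ∑ b, f4 b + c5 * ∑ b, f5 b := by
  rw [Finset.sum_add_distrib, Finset.sum_add_distrib, Finset.sum_add_distrib,
    Finset.sum_add_distrib, Finset.sum_add_distrib, Finset.sum_const,
    ← Finset.mul_sum, ← Finset.mul_sum, ← Finset.mul_sum, ← Finset.mul_sum, ← Finset.mul_sum,
    nsmul_eq_mul, Finset.card_univ]

lemma sum_affine2 {β : Type*} [Fintype β] (c1 c2 : ℝ) (f1 f2 : β → ℝ) :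
    ∑ b : β, (c1 * f1 b + c2 * f2 b) = c1 * ∑ b, f1 b + c2 * ∑ b, f2 b := by
  rw [Finset.sum_add_distrib, ← Finset.mul_sum, ← Finset.mul_sum]

lemma sum_affine2c {β : Type*} [Fintype β] (c0 c1 c2 : ℝ) (f1 f2 : β → ℝ) :
    ∑ b : β, (c0 + c1 * f1 b + c2 * f2 b)
      = (Fintype.card β : ℝ) * c0 + c1 * ∑ b, f1 b + c2 * ∑ b, f2 b := by
  rw [Finset.sum_add_distrib, Finset.sum_add_distrib, Finset.sum_const, ← Finset.mul_sum,
    ← Finset.mul_sum, nsmul_eq_mul, Finset.card_univ]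

lemma sum_affine4' {β : Type*} [Fintype β] (c1 c2 c3 c4 : ℝ) (f1 f2 f3 f4 : β → ℝ) :
    ∑ b : β, (c1 * f1 b + c2 * f2 b + c3 * f3 b + c4 * f4 b)
      = c1 * ∑ b, f1 b + c2 * ∑ b, f2 b + c3 * ∑ b, f3 b + c4 * ∑ b, f4 b := by
  rw [Finset.sum_add_distrib, Finset.sum_add_distrib, Finset.sum_add_distrib,
    ← Finset.mul_sum, ← Finset.mul_sum, ← Finset.mul_sum, ← Finset.mul_sum]

lemma final_identity (M N T A1 A2 Q P U W : ℝ) (hM : M ≠ 0) (hN : N ≠ 0)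
    (hN1 : N - 1 ≠ 0) :
    M * (A1 / N + (U ^ 2 - P - (A2 - A1)) / (N * (N - 1))) / M - (M / N * U / M) ^ 2
      = 1 / (N - 1) * A1 + -(1 / ((N - 1) * N)) * A2 + (T - 1) / ((N - 1) * N) * Q
          + -((T - 1) / ((N - 1) * N * N)) * W
        - 1 / N * ((1 / (N - 1) * (2 * (T + 1) * Q + 2 * P - (2 * (T + 1) * W + 2 * U ^ 2) / N)
            - (4 / (N - 1) * Q + -(4 / ((N - 1) * N)) * W)) / 2) := by
  field_simp
  ring
set_option maxHeartbeats 8000000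
theorem stmt16 {α : Type*} [Fintype α] [DecidableEq α] [LinearOrder α]
    (N T : ℕ) (hN : 2 ≤ N) (hcard : Fintype.card α = T + 1)
    (Na : α → ℕ) (hNa : ∀ a, 0 < Na a) (hsum : ∑ a, Na a = N)
    (Y : Fin N → α → ℝ)
    (Ω : Finset (Fin N → α))
    (hΩ : Ω = Finset.univ.filter
      (fun A => ∀ a, (Finset.univ.filter (fun i => A i = a)).card = Na a))
    (Ybar : (Fin N → α) → α → ℝ)
    (hYbar : ∀ A a, Ybar A a
      = (1 / (Na a : ℝ)) * ∑ i ∈ Finset.univ.filter (fun i => A i = a), Y i a)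
    (E : ((Fin N → α) → ℝ) → ℝ)
    (hE : ∀ f, E f = (∑ A ∈ Ω, f A) / (Ω.card : ℝ))
    (Var : ((Fin N → α) → ℝ) → ℝ)
    (hVar : ∀ f, Var f = E (fun A => (f A - E f) ^ 2))
    (Ypop : α → ℝ) (hYpop : ∀ a, Ypop a = (1 / (N : ℝ)) * ∑ i, Y i a)
    (S2 : α → ℝ)
    (hS2 : ∀ a, S2 a = (1 / ((N : ℝ) - 1)) * ∑ i, (Y i a - Ypop a) ^ 2)
    (V2 : α → α → ℝ)
    (hV2 : ∀ a a', V2 a a'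
      = (1 / ((N : ℝ) - 1)) * ∑ i, ((Y i a - Ypop a) + (Y i a' - Ypop a')) ^ 2) :
    Var (fun A => ∑ a, Ybar A a)
      = (∑ a, S2 a * (1 / (Na a : ℝ) + ((T : ℝ) - 1) / N))
        - (1 / (N : ℝ)) * ∑ a, ∑ a' ∈ Finset.univ.filter (fun a' => a < a'), V2 a a' := by
  classical
  have hN0 : 0 < N := Nat.lt_of_lt_of_le Nat.zero_lt_two hN
  have hΩpos : 0 < Ω.card := Finset.card_pos.2 (Ω_nonempty Na Ω hΩ hsum)
  have hMne : ((Ω.card : ℝ)) ≠ 0 := Nat.cast_ne_zero.2 hΩpos.ne'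
  have hNne : (N : ℝ) ≠ 0 := Nat.cast_ne_zero.2 hN0.ne'
  have hN2 : (2 : ℝ) ≤ (N : ℝ) := by exact_mod_cast hN
  have hN1ne : (N : ℝ) - 1 ≠ 0 := by linarith
  have hNacast : ∀ a, (Na a : ℝ) ≠ 0 := fun a => Nat.cast_ne_zero.2 (hNa a).ne'
  have hKcard : (Fintype.card α : ℝ) = (T : ℝ) + 1 := by rw [hcard]; push_cast; ring
  -- variance formula
  have hVarf : ∀ f : (Fin N → α) → ℝ,
      Var f = (∑ A ∈ Ω, (f A) ^ 2) / (Ω.card : ℝ) - ((∑ A ∈ Ω, f A) / (Ω.card : ℝ)) ^ 2 := by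
    intro f
    rw [hVar, hE, hE]
    have expand : ∀ A ∈ Ω, (f A - (∑ B ∈ Ω, f B) / (Ω.card : ℝ)) ^ 2
        = ((∑ B ∈ Ω, f B) / (Ω.card : ℝ)) ^ 2 + 1 * (f A ^ 2)
          + (-(2 * ((∑ B ∈ Ω, f B) / (Ω.card : ℝ)))) * f A := fun A _ => by ring
    rw [Finset.sum_congr rfl expand]
    rw [Finset.sum_add_distrib, Finset.sum_add_distrib, Finset.sum_const,
      ← Finset.mul_sum, ← Finset.mul_sum, nsmul_eq_mul]
    field_simp
    ring
  -- first moment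
  have hE1 : ∑ A ∈ Ω, (∑ a, Ybar A a) = (Ω.card : ℝ) / N * ∑ a, (∑ i, Y i a) := by
    rw [Finset.sum_comm, Finset.mul_sum]
    refine Finset.sum_congr rfl fun a _ => ?_
    rw [Finset.sum_congr rfl fun A (_ : A ∈ Ω) => hYbar A a]
    exact first_moment Na Ω hΩ hN0 hNa Y a
  -- second moment
  have hE2 : ∑ A ∈ Ω, (∑ a, Ybar A a) ^ 2
      = ∑ a, ∑ b, ((Ω.card : ℝ) * ((if a = b then ((∑ i, Y i a * Y i b)) / ((N : ℝ) * Na a) else 0)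
          + ((∑ i, Y i a) * (∑ i, Y i b) - (∑ i, Y i a * Y i b))
            * (1 - (if a = b then 1 / (Na a : ℝ) else 0)) / ((N : ℝ) * ((N : ℝ) - 1)))) := by
    have hsq : ∀ A ∈ Ω, (∑ a, Ybar A a) ^ 2 = ∑ a, ∑ b, Ybar A a * Ybar A b := by
      intro A _
      rw [sq, Finset.sum_mul_sum]
    rw [Finset.sum_congr rfl hsq, Finset.sum_comm]
    refine Finset.sum_congr rfl fun a _ => ?_
    rw [Finset.sum_comm]
    refine Finset.sum_congr rfl fun b _ => ?_
    rw [Finset.sum_congr rfl fun A (_ : A ∈ Ω) => by rw [hYbar A a, hYbar A b]]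
    exact second_moment Na Ω hΩ hN hNa Y a b
  -- evaluate the double sum of the second moment
  have E2val : ∑ a, ∑ b, ((Ω.card : ℝ) * ((if a = b then ((∑ i, Y i a * Y i b)) / ((N : ℝ) * Na a) else 0)
          + ((∑ i, Y i a) * (∑ i, Y i b) - (∑ i, Y i a * Y i b))
            * (1 - (if a = b then 1 / (Na a : ℝ) else 0)) / ((N : ℝ) * ((N : ℝ) - 1))))
      = (Ω.card : ℝ) * ((∑ a, (∑ i, Y i a * Y i a) / (Na a : ℝ)) / N
          + ((∑ a, (∑ i, Y i a)) ^ 2 - (∑ a, ∑ b, (∑ i, Y i a * Y i b))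
              - ((∑ a, (∑ i, Y i a) ^ 2 / (Na a : ℝ)) - ∑ a, (∑ i, Y i a * Y i a) / (Na a : ℝ)))
            / ((N : ℝ) * ((N : ℝ) - 1))) := by
    have split : ∀ a b : α, ((Ω.card : ℝ) * ((if a = b then ((∑ i, Y i a * Y i b)) / ((N : ℝ) * Na a) else 0)
          + ((∑ i, Y i a) * (∑ i, Y i b) - (∑ i, Y i a * Y i b))
            * (1 - (if a = b then 1 / (Na a : ℝ) else 0)) / ((N : ℝ) * ((N : ℝ) - 1))))
        = (Ω.card : ℝ) / ((N : ℝ) * ((N : ℝ) - 1)) * ((∑ i, Y i a) * (∑ i, Y i b) - (∑ i, Y i a * Y i b))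
          + (if a = b then (Ω.card : ℝ) * ((∑ i, Y i a * Y i a) / ((N : ℝ) * Na a)
              - ((∑ i, Y i a) ^ 2 - (∑ i, Y i a * Y i a)) / (((N : ℝ) * ((N : ℝ) - 1)) * Na a)) else 0) := by
      intro a b
      have hna : (Na a : ℝ) ≠ 0 := hNacast a
      by_cases hab : a = b
      · subst hab
        simp only [eq_self_iff_true, if_true]
        field_simp
        ring
      · simp only [if_neg hab]
        ring
    rw [Finset.sum_congr rfl fun a _ => Finset.sum_congr rfl fun b _ => split a b]
    have e1 : ∑ a, ∑ b, ((Ω.card : ℝ) / ((N : ℝ) * ((N : ℝ) - 1)) * ((∑ i, Y i a) * (∑ i, Y i b) - (∑ i, Y i a * Y i b))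
          + (if a = b then (Ω.card : ℝ) * ((∑ i, Y i a * Y i a) / ((N : ℝ) * Na a)
              - ((∑ i, Y i a) ^ 2 - (∑ i, Y i a * Y i a)) / (((N : ℝ) * ((N : ℝ) - 1)) * Na a)) else 0))
        = (∑ a, ∑ b, (Ω.card : ℝ) / ((N : ℝ) * ((N : ℝ) - 1)) * ((∑ i, Y i a) * (∑ i, Y i b) - (∑ i, Y i a * Y i b)))
          + ∑ a, ∑ b, (if a = b then (Ω.card : ℝ) * ((∑ i, Y i a * Y i a) / ((N : ℝ) * Na a)
              - ((∑ i, Y i a) ^ 2 - (∑ i, Y i a * Y i a)) / (((N : ℝ) * ((N : ℝ) - 1)) * Na a)) else 0) := by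
      rw [← Finset.sum_add_distrib]
      refine Finset.sum_congr rfl fun a _ => ?_
      rw [← Finset.sum_add_distrib]
    rw [e1, diag_sum]
    have e2 : ∑ a, ∑ b, (Ω.card : ℝ) / ((N : ℝ) * ((N : ℝ) - 1)) * ((∑ i, Y i a) * (∑ i, Y i b) - (∑ i, Y i a * Y i b))
        = (Ω.card : ℝ) / ((N : ℝ) * ((N : ℝ) - 1))
            * ((∑ a, (∑ i, Y i a)) ^ 2 - ∑ a, ∑ b, (∑ i, Y i a * Y i b)) := by
      have inner : ∀ a : α, ∑ b, (Ω.card : ℝ) / ((N : ℝ) * ((N : ℝ) - 1)) * ((∑ i, Y i a) * (∑ i, Y i b) - (∑ i, Y i a * Y i b))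
          = (Ω.card : ℝ) / ((N : ℝ) * ((N : ℝ) - 1)) * ((∑ i, Y i a) * (∑ b, (∑ i, Y i b)) - ∑ b, (∑ i, Y i a * Y i b)) := by
        intro a
        rw [← Finset.mul_sum, Finset.sum_sub_distrib, ← Finset.mul_sum]
      rw [Finset.sum_congr rfl fun a _ => inner a, ← Finset.mul_sum, Finset.sum_sub_distrib,
        ← Finset.sum_mul, sq]
    rw [e2]
    have e3 : ∑ a, (Ω.card : ℝ) * ((∑ i, Y i a * Y i a) / ((N : ℝ) * Na a)
          - ((∑ i, Y i a) ^ 2 - (∑ i, Y i a * Y i a)) / (((N : ℝ) * ((N : ℝ) - 1)) * Na a))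
        = ((Ω.card : ℝ) / N + (Ω.card : ℝ) / ((N : ℝ) * ((N : ℝ) - 1)))
              * (∑ a, (∑ i, Y i a * Y i a) / (Na a : ℝ))
          + (-(Ω.card : ℝ) / ((N : ℝ) * ((N : ℝ) - 1))) * (∑ a, (∑ i, Y i a) ^ 2 / (Na a : ℝ)) := by
      have e3a : ∀ a : α, (Ω.card : ℝ) * ((∑ i, Y i a * Y i a) / ((N : ℝ) * Na a)
            - ((∑ i, Y i a) ^ 2 - (∑ i, Y i a * Y i a)) / (((N : ℝ) * ((N : ℝ) - 1)) * Na a))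
          = ((Ω.card : ℝ) / N + (Ω.card : ℝ) / ((N : ℝ) * ((N : ℝ) - 1)))
              * ((∑ i, Y i a * Y i a) / (Na a : ℝ))
            + (-(Ω.card : ℝ) / ((N : ℝ) * ((N : ℝ) - 1))) * ((∑ i, Y i a) ^ 2 / (Na a : ℝ)) := by
        intro a
        have hna : (Na a : ℝ) ≠ 0 := hNacast a
        field_simp
        ring
      rw [Finset.sum_congr rfl fun a _ => e3a a, sum_affine2]
    rw [e3]
    have key : ∀ (M' N' B1 B2 U' P' : ℝ), N' ≠ 0 → N' - 1 ≠ 0 →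
        M' / (N' * (N' - 1)) * (U' ^ 2 - P')
            + ((M' / N' + M' / (N' * (N' - 1))) * B1 + (-M' / (N' * (N' - 1))) * B2)
          = M' * (B1 / N' + (U' ^ 2 - P' - (B2 - B1)) / (N' * (N' - 1))) := by
      intro M' N' B1 B2 U' P' h1 h2
      field_simp
      ring
    exact key _ _ _ _ _ _ hNne hN1ne
  -- sample variance rewrites
  have hS2' : ∀ a, S2 a = 1 / ((N : ℝ) - 1) * ((∑ i, Y i a * Y i a) - (∑ i, Y i a) ^ 2 / N) := by
    intro a
    have expand : ∀ i : Fin N, (Y i a - Ypop a) ^ 2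
        = (Ypop a) ^ 2 + 1 * (Y i a * Y i a) + (-(2 * Ypop a)) * Y i a := fun i => by ring
    rw [hS2 a, Finset.sum_congr rfl fun i _ => expand i, sum_affine2c, Fintype.card_fin,
      hYpop a]
    field_simp
    ring
  have hV2' : ∀ a b, V2 a b = 1 / ((N : ℝ) - 1) * ((∑ i, Y i a * Y i a) + (∑ i, Y i b * Y i b)
      + 2 * (∑ i, Y i a * Y i b) - ((∑ i, Y i a) + (∑ i, Y i b)) ^ 2 / N) := by
    intro a b
    have expand : ∀ i : Fin N, (Y i a - Ypop a + (Y i b - Ypop b)) ^ 2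
        = (Ypop a + Ypop b) ^ 2 + 1 * (Y i a * Y i a) + 1 * (Y i b * Y i b)
          + 2 * (Y i a * Y i b) + (-(2 * (Ypop a + Ypop b))) * Y i a
          + (-(2 * (Ypop a + Ypop b))) * Y i b := fun i => by ring
    rw [hV2 a b, Finset.sum_congr rfl fun i _ => expand i, sum_affine5, Fintype.card_fin,
      hYpop a, hYpop b]
    field_simp
    ring
  -- sum of the S2 terms
  have SS2 : ∑ a, S2 a * (1 / (Na a : ℝ) + ((T : ℝ) - 1) / N)
      = 1 / ((N : ℝ) - 1) * (∑ a, (∑ i, Y i a * Y i a) / (Na a : ℝ))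
        + (-(1 / (((N : ℝ) - 1) * N))) * (∑ a, (∑ i, Y i a) ^ 2 / (Na a : ℝ))
        + ((T : ℝ) - 1) / (((N : ℝ) - 1) * N) * (∑ a, (∑ i, Y i a * Y i a))
        + (-(((T : ℝ) - 1) / (((N : ℝ) - 1) * N * N))) * (∑ a, (∑ i, Y i a) ^ 2) := by
    have e : ∀ a : α, S2 a * (1 / (Na a : ℝ) + ((T : ℝ) - 1) / N)
        = 1 / ((N : ℝ) - 1) * ((∑ i, Y i a * Y i a) / (Na a : ℝ))
          + (-(1 / (((N : ℝ) - 1) * N))) * ((∑ i, Y i a) ^ 2 / (Na a : ℝ))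
          + ((T : ℝ) - 1) / (((N : ℝ) - 1) * N) * (∑ i, Y i a * Y i a)
          + (-(((T : ℝ) - 1) / (((N : ℝ) - 1) * N * N))) * ((∑ i, Y i a) ^ 2) := by
      intro a
      have hna : (Na a : ℝ) ≠ 0 := hNacast a
      rw [hS2' a]
      field_simp
      ring
    rw [Finset.sum_congr rfl fun a _ => e a, sum_affine4']
  -- double sum of V2
  have SV : ∑ a, ∑ b, V2 a b
      = 1 / ((N : ℝ) - 1) * (2 * ((T : ℝ) + 1) * (∑ a, (∑ i, Y i a * Y i a))
          + 2 * (∑ a, ∑ b, (∑ i, Y i a * Y i b))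
          - (2 * ((T : ℝ) + 1) * (∑ a, (∑ i, Y i a) ^ 2)
              + 2 * (∑ a, (∑ i, Y i a)) ^ 2) / N) := by
    have inner : ∀ a : α, ∑ b, V2 a b
        = ((T : ℝ) + 1) * (1 / ((N : ℝ) - 1) * ((∑ i, Y i a * Y i a) - (∑ i, Y i a) ^ 2 / N))
          + 1 / ((N : ℝ) - 1) * (∑ b, (∑ i, Y i b * Y i b))
          + 2 / ((N : ℝ) - 1) * (∑ b, (∑ i, Y i a * Y i b))
          + (-(2 * (∑ i, Y i a) / (((N : ℝ) - 1) * N))) * (∑ b, (∑ i, Y i b))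
          + (-(1 / (((N : ℝ) - 1) * N))) * (∑ b, (∑ i, Y i b) ^ 2) := by
      intro a
      have e : ∀ b : α, V2 a b
          = (1 / ((N : ℝ) - 1) * ((∑ i, Y i a * Y i a) - (∑ i, Y i a) ^ 2 / N))
            + 1 / ((N : ℝ) - 1) * (∑ i, Y i b * Y i b)
            + 2 / ((N : ℝ) - 1) * (∑ i, Y i a * Y i b)
            + (-(2 * (∑ i, Y i a) / (((N : ℝ) - 1) * N))) * (∑ i, Y i b)
            + (-(1 / (((N : ℝ) - 1) * N))) * ((∑ i, Y i b) ^ 2) := by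
        intro b
        rw [hV2' a b]
        field_simp
        ring
      rw [Finset.sum_congr rfl fun b _ => e b, sum_affine4, hKcard]
    have outer : ∀ a : α, (((T : ℝ) + 1) * (1 / ((N : ℝ) - 1) * ((∑ i, Y i a * Y i a) - (∑ i, Y i a) ^ 2 / N))
          + 1 / ((N : ℝ) - 1) * (∑ b, (∑ i, Y i b * Y i b))
          + 2 / ((N : ℝ) - 1) * (∑ b, (∑ i, Y i a * Y i b))
          + (-(2 * (∑ i, Y i a) / (((N : ℝ) - 1) * N))) * (∑ b, (∑ i, Y i b))
          + (-(1 / (((N : ℝ) - 1) * N))) * (∑ b, (∑ i, Y i b) ^ 2))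
        = (1 / ((N : ℝ) - 1) * (∑ b, (∑ i, Y i b * Y i b))
            + (-(1 / (((N : ℝ) - 1) * N))) * (∑ b, (∑ i, Y i b) ^ 2))
          + ((T : ℝ) + 1) / ((N : ℝ) - 1) * (∑ i, Y i a * Y i a)
          + 2 / ((N : ℝ) - 1) * (∑ b, (∑ i, Y i a * Y i b))
          + (-(2 * (∑ b, (∑ i, Y i b)) / (((N : ℝ) - 1) * N))) * (∑ i, Y i a)
          + (-(((T : ℝ) + 1) / (((N : ℝ) - 1) * N))) * ((∑ i, Y i a) ^ 2) := by
      intro a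
      field_simp
      ring
    rw [Finset.sum_congr rfl fun a _ => (inner a).trans (outer a), sum_affine4, hKcard]
    field_simp
    ring
  -- diagonal sum of V2
  have SD : ∑ a, V2 a a = 4 / ((N : ℝ) - 1) * (∑ a, (∑ i, Y i a * Y i a))
      + (-(4 / (((N : ℝ) - 1) * N))) * (∑ a, (∑ i, Y i a) ^ 2) := by
    have e : ∀ a : α, V2 a a = (4 / ((N : ℝ) - 1)) * (∑ i, Y i a * Y i a)
        + (-(4 / (((N : ℝ) - 1) * N))) * ((∑ i, Y i a) ^ 2) := by
      intro a
      rw [hV2' a a]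
      field_simp
      ring
    rw [Finset.sum_congr rfl fun a _ => e a, sum_affine2]
  -- symmetry and the pair sum
  have hsymm : ∀ a b, V2 a b = V2 b a := by
    intro a b
    rw [hV2 a b, hV2 b a]
    congr 1
    exact Finset.sum_congr rfl fun i _ => by ring
  have hpair := pair_sum V2 hsymm
  rw [SV, SD] at hpair
  have SP : (∑ a, ∑ a' ∈ Finset.univ.filter (fun a' => a < a'), V2 a a')
      = (1 / ((N : ℝ) - 1) * (2 * ((T : ℝ) + 1) * (∑ a, (∑ i, Y i a * Y i a))
          + 2 * (∑ a, ∑ b, (∑ i, Y i a * Y i b))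
          - (2 * ((T : ℝ) + 1) * (∑ a, (∑ i, Y i a) ^ 2)
              + 2 * (∑ a, (∑ i, Y i a)) ^ 2) / N)
        - (4 / ((N : ℝ) - 1) * (∑ a, (∑ i, Y i a * Y i a))
          + (-(4 / (((N : ℝ) - 1) * N))) * (∑ a, (∑ i, Y i a) ^ 2))) / 2 := by
    linarith [hpair]
  -- final assembly
  have hL : Var (fun A => ∑ a, Ybar A a)
      = (∑ A ∈ Ω, (∑ a, Ybar A a) ^ 2) / (Ω.card : ℝ)
        - ((∑ A ∈ Ω, ∑ a, Ybar A a) / (Ω.card : ℝ)) ^ 2 := hVarf _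
  rw [hL, hE2, E2val, hE1, SS2, SP]
  generalize (∑ a, (∑ i, Y i a * Y i a) / (Na a : ℝ)) = A1
  generalize (∑ a, (∑ i, Y i a) ^ 2 / (Na a : ℝ)) = A2
  generalize (∑ a, ∑ b, (∑ i, Y i a * Y i b)) = P
  generalize (∑ a, (∑ i, Y i a * Y i a)) = Q
  generalize (∑ a, (∑ i, Y i a) ^ 2) = W
  generalize (∑ a, (∑ i, Y i a)) = U
  exact final_identity _ _ _ _ _ _ _ _ _ hMne hNne hN1ne
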